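/- arXiv:0809.1186 — 3 statements merged into one kernel-verified Lean document; each statement's English description precedes it below -/
import Mathlib

section
/- (Maximum principle for the hyperbolic affine sphere equation) Let Ω ⊆ ℝⁿ be a bounded open set and let u, v : closure(Ω) → ℝ be continuous, smooth and strictly convex on Ω, negative on Ω, satisfying det Hess u = (−1/u)^{n+2} and det Hess v = (−1/v)^{n+2} on Ω, with u = v = 0 on ∂Ω. Then u = v on Ω. -/
open Matrix Filter Topology

/-- The Hessian matrix of second partial derivatives of `u` at `x`. -/
noncomputable def Hess {n : ℕ} (u : (Fin n → ℝ) → ℝ) (x : Fin n → ℝ) :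
    Matrix (Fin n) (Fin n) ℝ :=
  fun i j => iteratedFDeriv ℝ 2 u x ![Pi.single i 1, Pi.single j 1]

lemma one_le_det_of_posSemidef_sub_one {n : ℕ} {M : Matrix (Fin n) (Fin n) ℝ}
    (hM : M.IsHermitian) (h : (M - 1).PosSemidef) : 1 ≤ M.det := by
  rw [hM.det_eq_prod_eigenvalues]
  have h1 : ∀ i, 1 ≤ hM.eigenvalues i := by
    intro i
    set x : Fin n → ℝ := ⇑(hM.eigenvectorBasis i) with hx
    have hv := h.re_dotProduct_nonneg x
    have h2 : ‖hM.eigenvectorBasis i‖ = 1 := hM.eigenvectorBasis.orthonormal.1 i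
    have h3 : ∑ j, x j * x j = 1 := by
      have h4 := real_inner_self_eq_norm_sq (hM.eigenvectorBasis i)
      rw [h2] at h4
      simp only [PiLp.inner_apply, ← hx] at h4
      simpa [sq] using h4
    have hme : M *ᵥ x = hM.eigenvalues i • x := hM.mulVec_eigenvectorBasis i
    rw [sub_mulVec, dotProduct_sub, one_mulVec, hme, dotProduct_smul] at hv
    simp only [smul_eq_mul, RCLike.re_to_real, dotProduct, Pi.star_apply, star_trivial] at hv
    rw [h3] at hv
    linarith
  calc (1:ℝ) = ∏ _i : Fin n, 1 := by simp
  _ ≤ ∏ i, hM.eigenvalues i :=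
      Finset.prod_le_prod (fun i _ => by norm_num) (fun i _ => h1 i)

open scoped MatrixOrder in
lemma det_le_det_of_sub_posSemidef {n : ℕ} {A B : Matrix (Fin n) (Fin n) ℝ}
    (hA : A.PosDef) (h : (B - A).PosSemidef) : A.det ≤ B.det := by
  set S := CFC.sqrt A with hS
  have hSH : S.IsHermitian := (CFC.sqrt_nonneg A).posSemidef.isHermitian
  have hSS : S * S = A := CFC.sqrt_mul_sqrt_self A hA.posSemidef.nonneg
  have hdetA : 0 < A.det := hA.det_pos
  have hdS : IsUnit S.det := by
    refine isUnit_iff_ne_zero.mpr fun h0 => ?_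
    rw [← hSS, det_mul, h0, mul_zero] at hdetA; exact lt_irrefl _ hdetA
  have hinv1 : S * S⁻¹ = 1 := mul_nonsing_inv S hdS
  have hinv2 : S⁻¹ * S = 1 := nonsing_inv_mul S hdS
  have hSiH : (S⁻¹).IsHermitian := hSH.inv
  set M := S⁻¹ * B * S⁻¹ with hM
  have hAid : S⁻¹ * A * S⁻¹ = 1 := by
    rw [← hSS, ← Matrix.mul_assoc, hinv2, one_mul, hinv1]
  have hsub : M - 1 = S⁻¹ * (B - A) * S⁻¹ := by
    rw [Matrix.mul_sub, Matrix.sub_mul, hM, hAid]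
  have hMsub : (M - 1).PosSemidef := by
    rw [hsub]
    have := h.mul_mul_conjTranspose_same S⁻¹
    rwa [hSiH.eq] at this
  have hMH : M.IsHermitian := by
    have h6 := hMsub.isHermitian.add (isHermitian_one (n := Fin n) (α := ℝ))
    rwa [sub_add_cancel] at h6
  have hdetM : 1 ≤ M.det := one_le_det_of_posSemidef_sub_one hMH hMsub
  have hBeq : B = S * M * S := by
    rw [hM, Matrix.mul_assoc, Matrix.mul_assoc, hinv2, Matrix.mul_one, ← Matrix.mul_assoc,
      hinv1, one_mul]
  have hAd : A.det = S.det * S.det := by rw [← hSS, det_mul]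
  have hdet : B.det = A.det * M.det := by
    rw [hBeq, det_mul, det_mul, hAd]; ring
  nlinarith

lemma second_deriv_nonpos_at_localmax {g g' : ℝ → ℝ} {c : ℝ}
    (hmax : IsLocalMax g 0)
    (hg' : ∀ᶠ t in 𝓝 (0:ℝ), HasDerivAt g (g' t) t)
    (hg'' : HasDerivAt g' c 0) : c ≤ 0 := by
  by_contra hc
  push_neg at hc
  have hg'0 : g' 0 = 0 := by
    have h1 : deriv g 0 = 0 := hmax.deriv_eq_zero
    have h2 : HasDerivAt g (g' 0) 0 := hg'.self_of_nhds
    rw [h2.deriv] at h1; exact h1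
  have hslope : Tendsto (fun t : ℝ => g' t / t) (𝓝[≠] 0) (𝓝 c) := by
    have heq : (fun t : ℝ => g' t / t) = slope g' 0 := by
      funext t; rw [slope_def_field, hg'0, sub_zero, sub_zero]
    rw [heq]
    exact hasDerivAt_iff_tendsto_slope.mp hg''
  have hev : ∀ᶠ t in 𝓝[≠] (0:ℝ), 0 < g' t / t :=
    hslope.eventually (eventually_gt_nhds hc)
  have hall : ∀ᶠ t in 𝓝 (0:ℝ), (t ≠ 0 → 0 < g' t / t) ∧ HasDerivAt g (g' t) t ∧ g t ≤ g 0 := by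
    refine ((eventually_nhdsWithin_iff.mp hev).and (hg'.and hmax)).mono ?_
    intro t ht
    exact ⟨fun h => ht.1 h, ht.2.1, ht.2.2⟩
  obtain ⟨ε, hε, hball⟩ := Metric.eventually_nhds_iff.mp hall
  set t₁ : ℝ := ε / 2 with ht₁
  have ht₁pos : 0 < t₁ := by positivity
  have ht₁mem : ∀ t ∈ Set.Icc (0:ℝ) t₁, dist t (0:ℝ) < ε := by
    intro t ht
    rw [Real.dist_eq, sub_zero, abs_of_nonneg ht.1]
    calc t ≤ t₁ := ht.2
    _ < ε := by rw [ht₁]; linarith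
  have hcont : ContinuousOn g (Set.Icc 0 t₁) := by
    intro t ht
    exact ((hball (ht₁mem t ht)).2.1.continuousAt).continuousWithinAt
  have hderiv : ∀ t ∈ Set.Ioo (0:ℝ) t₁, HasDerivAt g (g' t) t := by
    intro t ht
    exact (hball (ht₁mem t ⟨le_of_lt ht.1, le_of_lt ht.2⟩)).2.1
  obtain ⟨d, hd, hds⟩ := exists_hasDerivAt_eq_slope g g' ht₁pos hcont hderiv
  have hd0 : d ≠ 0 := ne_of_gt hd.1
  have hdpos : 0 < g' d / d := (hball (ht₁mem d ⟨le_of_lt hd.1, le_of_lt hd.2⟩)).1 hd0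
  have hgd : 0 < g' d := by
    have := mul_pos hdpos hd.1
    rwa [div_mul_cancel₀ _ hd0] at this
  have hle : g t₁ ≤ g 0 := (hball (ht₁mem t₁ ⟨le_of_lt ht₁pos, le_refl _⟩)).2.2
  rw [hds] at hgd
  have : (g t₁ - g 0) / (t₁ - 0) ≤ 0 := by
    apply div_nonpos_of_nonpos_of_nonneg <;> linarith
  linarith

lemma bilinear_expand {n : ℕ} (L : (Fin n → ℝ) →L[ℝ] (Fin n → ℝ) →L[ℝ] ℝ) (w : Fin n → ℝ) :
    L w w = ∑ i, ∑ j, w i * (L (Pi.single i 1) (Pi.single j 1) * w j) := by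
  have hw : w = ∑ i, w i • (Pi.single i (1:ℝ) : Fin n → ℝ) := by
    conv_lhs => rw [← Finset.univ_sum_single w]
    congr 1; funext i
    rw [← Pi.single_smul, smul_eq_mul, mul_one]
  have hrow : ∀ y, L w y = ∑ i, w i * L (Pi.single i 1) y := by
    intro y
    conv_lhs => rw [hw]
    rw [map_sum, ContinuousLinearMap.sum_apply]
    exact Finset.sum_congr rfl fun i _ => by
      rw [_root_.map_smul, ContinuousLinearMap.smul_apply, smul_eq_mul]
  rw [hrow w]
  refine Finset.sum_congr rfl fun i _ => ?_
  have h2 : L (Pi.single i 1) w = ∑ j, w j * L (Pi.single i 1) (Pi.single j 1) := by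
    conv_lhs => rw [hw]
    rw [map_sum]
    exact Finset.sum_congr rfl fun j _ => by rw [_root_.map_smul, smul_eq_mul]
  rw [h2, Finset.mul_sum]
  exact Finset.sum_congr rfl fun j _ => by ring

lemma key_le {n : ℕ} (Ω : Set (Fin n → ℝ))
    (hΩ : IsOpen Ω) (hbd : Bornology.IsBounded Ω)
    (u v : (Fin n → ℝ) → ℝ)
    (hu_cont : ContinuousOn u (closure Ω)) (hv_cont : ContinuousOn v (closure Ω))
    (hu_smooth : ContDiffOn ℝ (⊤ : ℕ∞) u Ω) (hv_smooth : ContDiffOn ℝ (⊤ : ℕ∞) v Ω)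
    (hu_pos : ∀ x ∈ Ω, (Hess u x).PosDef) (hv_pos : ∀ x ∈ Ω, (Hess v x).PosDef)
    (hu_neg : ∀ x ∈ Ω, u x < 0) (hv_neg : ∀ x ∈ Ω, v x < 0)
    (hu_ma : ∀ x ∈ Ω, (Hess u x).det = (-1 / u x) ^ (n + 2))
    (hv_ma : ∀ x ∈ Ω, (Hess v x).det = (-1 / v x) ^ (n + 2))
    (hu_bdry : ∀ x ∈ frontier Ω, u x = 0) (hv_bdry : ∀ x ∈ frontier Ω, v x = 0) :
    ∀ x ∈ Ω, u x ≤ v x := by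
  intro x hx
  by_contra hlt
  push_neg at hlt
  set f : (Fin n → ℝ) → ℝ := fun y => u y - v y with hf
  have hfx : 0 < f x := by simp [hf]; linarith
  have hK : IsCompact (closure Ω) := hbd.isCompact_closure
  have hf_cont : ContinuousOn f (closure Ω) := hu_cont.sub hv_cont
  obtain ⟨x₀, hx₀K, hmax⟩ := hK.exists_isMaxOn ⟨x, subset_closure hx⟩ hf_cont
  have hfx₀ : 0 < f x₀ := lt_of_lt_of_le hfx (hmax (subset_closure hx))
  have hx₀Ω : x₀ ∈ Ω := by
    by_contra hno
    have hfr : x₀ ∈ frontier Ω := by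
      rw [frontier, hΩ.interior_eq]
      exact ⟨hx₀K, hno⟩
    have : f x₀ = 0 := by simp [hf, hu_bdry x₀ hfr, hv_bdry x₀ hfr]
    linarith
  have hmaxloc : IsLocalMax f x₀ :=
    hmax.isLocalMax (Filter.mem_of_superset (hΩ.mem_nhds hx₀Ω) subset_closure)
  have hfs : ContDiffOn ℝ (⊤ : ℕ∞) f Ω := hu_smooth.sub hv_smooth
  have hfat : ContDiffAt ℝ (⊤ : ℕ∞) f x₀ := hfs.contDiffAt (hΩ.mem_nhds hx₀Ω)
  set F1 := fderiv ℝ f with hF1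
  set B := fderiv ℝ F1 x₀ with hB
  have hF1diff : DifferentiableAt ℝ F1 x₀ :=
    (hfat.fderiv_right (m := 1) ((by norm_cast))).differentiableAt one_ne_zero
  -- quadratic form of B is nonpositive
  have hquad : ∀ w : Fin n → ℝ, B w w ≤ 0 := by
    intro w
    have htend : Tendsto (fun t : ℝ => x₀ + t • w) (𝓝 0) (𝓝 x₀) := by
      have hcont : Continuous (fun t : ℝ => x₀ + t • w) := by continuity
      have h0 : x₀ + (0:ℝ) • w = x₀ := by simp
      simpa [h0] using hcont.tendsto 0
    have hmem : ∀ᶠ t in 𝓝 (0:ℝ), x₀ + t • w ∈ Ω := htend (hΩ.mem_nhds hx₀Ω)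
    have hL : ∀ t : ℝ, HasDerivAt (fun s : ℝ => x₀ + s • w) w t := by
      intro t
      simpa using ((hasDerivAt_id t).smul_const w).const_add x₀
    set g : ℝ → ℝ := fun t => f (x₀ + t • w) with hg
    set g' : ℝ → ℝ := fun t => F1 (x₀ + t • w) w with hg'def
    have hgmax : IsLocalMax g 0 := by
      have h1 := htend.eventually hmaxloc
      have h0 : g 0 = f x₀ := by simp [hg]
      rw [← h0] at h1
      exact h1
    have hg' : ∀ᶠ t in 𝓝 (0:ℝ), HasDerivAt g (g' t) t := by
      refine hmem.mono fun t ht => ?_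
      have hd : DifferentiableAt ℝ f (x₀ + t • w) :=
        (hfs.contDiffAt (hΩ.mem_nhds ht)).differentiableAt (by simp)
      exact hd.hasFDerivAt.comp_hasDerivAt t (hL t)
    have hg'' : HasDerivAt g' (B w w) 0 := by
      have hBf : HasFDerivAt F1 B x₀ := hF1diff.hasFDerivAt
      have hcomp : HasFDerivAt (fun y => F1 y w)
          ((ContinuousLinearMap.apply ℝ ℝ w).comp B) x₀ :=
        (ContinuousLinearMap.apply ℝ ℝ w).hasFDerivAt.comp x₀ hBf
      have h0 : x₀ + (0:ℝ) • w = x₀ := by simp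
      have hcomp' : HasFDerivAt (fun y => F1 y w)
          ((ContinuousLinearMap.apply ℝ ℝ w).comp B) (x₀ + (0:ℝ) • w) := by
        rw [h0]; exact hcomp
      have := hcomp'.comp_hasDerivAt 0 (hL 0)
      exact this
    exact second_deriv_nonpos_at_localmax hgmax hg' hg''
  -- relate B to Hessians of u and v
  have hudiff : DifferentiableAt ℝ (fderiv ℝ u) x₀ :=
    ((hu_smooth.contDiffAt (hΩ.mem_nhds hx₀Ω)).fderiv_right (m := 1) (by norm_cast)).differentiableAt one_ne_zero
  have hvdiff : DifferentiableAt ℝ (fderiv ℝ v) x₀ :=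
    ((hv_smooth.contDiffAt (hΩ.mem_nhds hx₀Ω)).fderiv_right (m := 1) (by norm_cast)).differentiableAt one_ne_zero
  have hder_eq : F1 =ᶠ[𝓝 x₀] fun y => fderiv ℝ u y - fderiv ℝ v y := by
    filter_upwards [hΩ.mem_nhds hx₀Ω] with y hy
    have hud : DifferentiableAt ℝ u y :=
      (hu_smooth.contDiffAt (hΩ.mem_nhds hy)).differentiableAt (by simp)
    have hvd : DifferentiableAt ℝ v y :=
      (hv_smooth.contDiffAt (hΩ.mem_nhds hy)).differentiableAt (by simp)
    exact fderiv_sub hud hvd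
  have hBuv : B = fderiv ℝ (fderiv ℝ u) x₀ - fderiv ℝ (fderiv ℝ v) x₀ := by
    rw [hB, hder_eq.fderiv_eq]
    exact fderiv_sub hudiff hvdiff
  have hHu : ∀ i j, Hess u x₀ i j
      = fderiv ℝ (fderiv ℝ u) x₀ (Pi.single i 1) (Pi.single j 1) := by
    intro i j
    show iteratedFDeriv ℝ 2 u x₀ ![Pi.single i 1, Pi.single j 1] = _
    rw [iteratedFDeriv_two_apply]
    simp
  have hHv : ∀ i j, Hess v x₀ i j
      = fderiv ℝ (fderiv ℝ v) x₀ (Pi.single i 1) (Pi.single j 1) := by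
    intro i j
    show iteratedFDeriv ℝ 2 v x₀ ![Pi.single i 1, Pi.single j 1] = _
    rw [iteratedFDeriv_two_apply]
    simp
  have hD : (Hess v x₀ - Hess u x₀).PosSemidef := by
    rw [posSemidef_iff_dotProduct_mulVec]
    constructor
    · exact ((hv_pos x₀ hx₀Ω).1).sub ((hu_pos x₀ hx₀Ω).1)
    · intro w
      have hq := hquad w
      rw [hBuv] at hq
      simp only [ContinuousLinearMap.coe_sub', Pi.sub_apply, ContinuousLinearMap.sub_apply] at hq
      have hBu := bilinear_expand (fderiv ℝ (fderiv ℝ u) x₀) w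
      have hBv := bilinear_expand (fderiv ℝ (fderiv ℝ v) x₀) w
      have hlhs : dotProduct (star w) ((Hess v x₀ - Hess u x₀) *ᵥ w)
          = (∑ i, ∑ j, w i * (Hess v x₀ i j * w j))
            - ∑ i, ∑ j, w i * (Hess u x₀ i j * w j) := by
        simp only [dotProduct, mulVec, Matrix.sub_apply, Pi.star_apply, star_trivial]
        rw [← Finset.sum_sub_distrib]
        refine Finset.sum_congr rfl fun i _ => ?_
        rw [← Finset.sum_sub_distrib, Finset.mul_sum]
        refine Finset.sum_congr rfl fun j _ => ?_
        ring
      rw [hlhs]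
      simp only [hHu, hHv]
      rw [← hBu, ← hBv]
      linarith
  have hdet := det_le_det_of_sub_posSemidef (hu_pos x₀ hx₀Ω) hD
  rw [hu_ma x₀ hx₀Ω, hv_ma x₀ hx₀Ω] at hdet
  have hu0 := hu_neg x₀ hx₀Ω
  have hv0 := hv_neg x₀ hx₀Ω
  have hvu : v x₀ < u x₀ := by
    have : 0 < u x₀ - v x₀ := hfx₀
    linarith
  have e1 : -1 / v x₀ = 1 / (-v x₀) := by rw [neg_div, ← div_neg]
  have e2 : -1 / u x₀ = 1 / (-u x₀) := by rw [neg_div, ← div_neg]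
  have h1 : -1 / v x₀ < -1 / u x₀ := by
    rw [e1, e2]
    exact one_div_lt_one_div_of_lt (by linarith) (by linarith)
  have h2 : (0:ℝ) ≤ -1 / v x₀ := by
    rw [e1]
    exact le_of_lt (div_pos one_pos (by linarith))
  have h3 : (-1 / v x₀) ^ (n + 2) < (-1 / u x₀) ^ (n + 2) :=
    pow_lt_pow_left₀ h1 h2 (by omega)
  linarith

/-- (Maximum principle / uniqueness for the hyperbolic affine sphere equation)
Two continuous-up-to-the-boundary, smooth strictly convex negative solutions of
`det Hess u = (−1/u)^{n+2}` on a bounded open set `Ω` with zero boundary values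
coincide. -/
theorem hyperbolic_affine_sphere_uniqueness {n : ℕ} (Ω : Set (Fin n → ℝ))
    (hΩ : IsOpen Ω) (hbd : Bornology.IsBounded Ω)
    (u v : (Fin n → ℝ) → ℝ)
    (hu_cont : ContinuousOn u (closure Ω)) (hv_cont : ContinuousOn v (closure Ω))
    (hu_smooth : ContDiffOn ℝ (⊤ : ℕ∞) u Ω) (hv_smooth : ContDiffOn ℝ (⊤ : ℕ∞) v Ω)
    (hu_pos : ∀ x ∈ Ω, (Hess u x).PosDef) (hv_pos : ∀ x ∈ Ω, (Hess v x).PosDef)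
    (hu_neg : ∀ x ∈ Ω, u x < 0) (hv_neg : ∀ x ∈ Ω, v x < 0)
    (hu_ma : ∀ x ∈ Ω, (Hess u x).det = (-1 / u x) ^ (n + 2))
    (hv_ma : ∀ x ∈ Ω, (Hess v x).det = (-1 / v x) ^ (n + 2))
    (hu_bdry : ∀ x ∈ frontier Ω, u x = 0) (hv_bdry : ∀ x ∈ frontier Ω, v x = 0) :
    Set.EqOn u v Ω := by
  intro x hx
  exact le_antisymm
    (key_le Ω hΩ hbd u v hu_cont hv_cont hu_smooth hv_smooth hu_pos hv_pos hu_neg hv_neg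
      hu_ma hv_ma hu_bdry hv_bdry x hx)
    (key_le Ω hΩ hbd v u hv_cont hu_cont hv_smooth hu_smooth hv_pos hu_pos hv_neg hu_neg
      hv_ma hu_ma hv_bdry hu_bdry x hx)
end

section
/- (Monotonicity in ε) Let Ω ⊆ ℝⁿ be bounded open, and for ε > 0 let u_ε be continuous on closure(Ω), smooth strictly convex on Ω, satisfying det Hess u_ε = (−1/(u_ε − ε))^{n+2} on Ω, u_ε < ε on Ω, and u_ε = 0 on ∂Ω. If 0 < ε < ε′, then u_ε ≤ u_{ε′} on Ω. -/
open Matrix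
open Filter Topology

section Aux

lemma eig_le_one' {m : Type*} [Fintype m] [DecidableEq m] {M : Matrix m m ℝ}
    (hM : M.PosSemidef) (h1M : ((1 : Matrix m m ℝ) - M).PosSemidef) (i : m) :
    hM.1.eigenvalues i ≤ 1 := by
  set v := hM.1.eigenvectorBasis i with hv
  have hnorm : ‖v‖ = 1 := hM.1.eigenvectorBasis.orthonormal.1 i
  have hvv : dotProduct (star ⇑v) ⇑v = 1 := by
    have : (inner ℝ v v : ℝ) = dotProduct (star ⇑v) ⇑v := rfl
    rw [← this, real_inner_self_eq_norm_sq, hnorm, one_pow]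
  have heig := hM.1.eigenvalues_eq i
  have hpos := h1M.dotProduct_mulVec_nonneg ⇑v
  rw [sub_mulVec, one_mulVec, dotProduct_sub, hvv] at hpos
  have : dotProduct (star ⇑v) (M *ᵥ ⇑v) = hM.1.eigenvalues i := by
    rw [heig, ← hv]; simp
  linarith [hpos, this ▸ hpos]

open scoped MatrixOrder in
lemma det_mono' {m : Type*} [Fintype m] [DecidableEq m] {A B : Matrix m m ℝ}
    (hA : A.PosDef) (hBA : (B - A).PosSemidef) : A.det ≤ B.det := by
  have hB : B.PosDef := by
    have := hA.add_posSemidef hBA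
    simpa using this
  set S := CFC.sqrt B with hSdef
  have hS : S.PosSemidef := (CFC.sqrt_nonneg B).posSemidef
  have hSS : S * S = B := CFC.sqrt_mul_sqrt_self B hB.posSemidef.nonneg
  have hdetSS : S.det * S.det = B.det := by rw [← det_mul, hSS]
  have hdetB : 0 < B.det := hB.det_pos
  have hdetS : S.det ≠ 0 := by
    intro h; rw [h, mul_zero] at hdetSS; linarith
  have hSunit : IsUnit S.det := isUnit_iff_ne_zero.2 hdetS
  have hinv : S⁻¹ * S = 1 := nonsing_inv_mul S hSunit
  have hinv' : S * S⁻¹ = 1 := mul_nonsing_inv S hSunit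
  have hSinv : (S⁻¹).PosSemidef := hS.inv
  have hSinvH : (S⁻¹)ᴴ = S⁻¹ := hSinv.1
  set M := S⁻¹ * A * S⁻¹ with hMdef
  have hM : M.PosSemidef := by
    have := hA.posSemidef.mul_mul_conjTranspose_same S⁻¹
    rwa [hSinvH] at this
  have hSBS : S⁻¹ * B * S⁻¹ = 1 := by
    rw [← hSS, ← mul_assoc S⁻¹ S S, hinv, one_mul, hinv']
  have h1M : ((1 : Matrix m m ℝ) - M).PosSemidef := by
    have h : (1 : Matrix m m ℝ) - M = S⁻¹ * (B - A) * S⁻¹ := by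
      rw [Matrix.mul_sub, Matrix.sub_mul, hSBS, hMdef]
    rw [h]
    have := hBA.mul_mul_conjTranspose_same S⁻¹
    rwa [hSinvH] at this
  have hdet : M.det = ∏ i, hM.1.eigenvalues i := by
    have := hM.1.det_eq_prod_eigenvalues
    simpa using this
  have hdetM : M.det ≤ 1 := by
    rw [hdet]
    apply Finset.prod_le_one
    · intro i _; exact hM.eigenvalues_nonneg i
    · intro i _; exact eig_le_one' hM h1M i
  have hdetMnn : 0 ≤ M.det := by
    rw [hdet]
    exact Finset.prod_nonneg fun i _ => hM.eigenvalues_nonneg i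
  have hAeq : A = S * M * S := by
    rw [hMdef, ← mul_assoc, ← mul_assoc, hinv', one_mul, mul_assoc, hinv, mul_one]
  calc A.det = S.det * M.det * S.det := by rw [hAeq, det_mul, det_mul]
    _ = B.det * M.det := by nlinarith [hdetSS]
    _ ≤ B.det * 1 := by nlinarith
    _ = B.det := mul_one _

lemma second_deriv_test_1d' {g g₁ : ℝ → ℝ} {c : ℝ}
    (hmax : IsLocalMax g 0)
    (hg : ∀ᶠ t in nhds (0:ℝ), HasDerivAt g (g₁ t) t)
    (hg₁ : HasDerivAt g₁ c 0) : c ≤ 0 := by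
  by_contra hc
  push_neg at hc
  have h0 : g₁ 0 = 0 := by
    have h1 : deriv g 0 = 0 := hmax.deriv_eq_zero
    have h2 : deriv g 0 = g₁ 0 := (hg.self_of_nhds).deriv
    linarith
  have hslope : Filter.Tendsto (slope g₁ 0) (nhdsWithin 0 {(0:ℝ)}ᶜ) (nhds c) :=
    hasDerivAt_iff_tendsto_slope.1 hg₁
  have hpos : ∀ᶠ t in nhdsWithin 0 {(0:ℝ)}ᶜ, 0 < slope g₁ 0 t :=
    hslope.eventually (eventually_gt_nhds hc)
  have hmono : nhdsWithin (0:ℝ) (Set.Ioi 0) ≤ nhdsWithin 0 {(0:ℝ)}ᶜ :=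
    nhdsWithin_mono 0 (fun x hx => ne_of_gt hx)
  have hpos' : ∀ᶠ t in nhdsWithin (0:ℝ) (Set.Ioi 0), 0 < g₁ t := by
    filter_upwards [hmono hpos, self_mem_nhdsWithin] with t ht ht'
    have htpos : (0:ℝ) < t := ht'
    have hsl : slope g₁ 0 t = g₁ t / t := by
      simp [slope_def_field, h0]
    rw [hsl] at ht
    exact (div_pos_iff.1 ht).resolve_right (fun h => absurd htpos (not_lt.2 h.2.le)) |>.1
  obtain ⟨δ₂, hδ₂mem, hδ₂⟩ := mem_nhdsGT_iff_exists_Ioc_subset.1 hpos'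
  have hδ₂pos : (0:ℝ) < δ₂ := hδ₂mem
  obtain ⟨δ₁, hδ₁pos, hδ₁⟩ := Metric.eventually_nhds_iff.1 (hg.and hmax)
  set δ := min (δ₁/2) δ₂ with hδdef
  have hδpos : 0 < δ := lt_min (by linarith) hδ₂pos
  have hIcc : ∀ t ∈ Set.Icc (0:ℝ) δ, HasDerivAt g (g₁ t) t ∧ g t ≤ g 0 := by
    intro t ht
    apply hδ₁
    have h1 : |t| ≤ δ := by
      rw [abs_of_nonneg ht.1]; exact ht.2
    calc dist t 0 = |t| := by simp [Real.dist_eq]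
      _ ≤ δ := h1
      _ < δ₁ := lt_of_le_of_lt (min_le_left _ _) (by linarith)
  have hsm : StrictMonoOn g (Set.Icc 0 δ) := by
    apply strictMonoOn_of_deriv_pos (convex_Icc 0 δ)
    · intro t ht
      exact ((hIcc t ht).1.continuousAt).continuousWithinAt
    · intro t ht
      rw [interior_Icc] at ht
      rw [((hIcc t ⟨ht.1.le, ht.2.le⟩).1).deriv]
      exact hδ₂ ⟨ht.1, ht.2.le.trans (min_le_right _ _)⟩
  have h1 : g 0 < g δ := hsm (Set.left_mem_Icc.2 hδpos.le) (Set.right_mem_Icc.2 hδpos.le) hδpos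
  have h2 : g δ ≤ g 0 := (hIcc δ (Set.right_mem_Icc.2 hδpos.le)).2
  linarith

lemma snd_deriv_nonpos_at_localMax' {E : Type*} [NormedAddCommGroup E] [NormedSpace ℝ E]
    {f : E → ℝ} {z : E} (hf : ContDiffAt ℝ 2 f z) (hmax : IsLocalMax f z) (v : E) :
    fderiv ℝ (fderiv ℝ f) z v v ≤ 0 := by
  have hev : ∀ᶠ y in 𝓝 z, DifferentiableAt ℝ f y := by
    filter_upwards [hf.eventually (by simp)] with y hy
    exact hy.differentiableAt two_ne_zero
  have hF : DifferentiableAt ℝ (fderiv ℝ f) z :=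
    (hf.fderiv_right (m := 1) (by norm_num)).differentiableAt one_ne_zero
  set L : ℝ → E := fun t => z + t • v with hLdef
  have hL : ∀ t, HasDerivAt L v t := fun t => by
    simpa [hLdef] using ((hasDerivAt_id t).smul_const v).const_add z
  have hL0 : L 0 = z := by simp [hLdef]
  have hLc : Continuous L := by fun_prop
  have hLt : Filter.Tendsto L (𝓝 0) (𝓝 z) := by
    rw [← hL0]; exact hLc.continuousAt
  have hgev : ∀ᶠ t in 𝓝 (0:ℝ), HasDerivAt (fun s => f (L s)) (fderiv ℝ f (L t) v) t := by
    filter_upwards [hLt.eventually hev] with t ht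
    exact (ht.hasFDerivAt).comp_hasDerivAt t (hL t)
  have hg1 : HasDerivAt (fun t => fderiv ℝ f (L t) v) (fderiv ℝ (fderiv ℝ f) z v v) 0 := by
    have h1 : HasDerivAt (fun t => fderiv ℝ f (L t)) (fderiv ℝ (fderiv ℝ f) z v) 0 := by
      have h0 : HasFDerivAt (fderiv ℝ f) (fderiv ℝ (fderiv ℝ f) z) (L 0) := hL0 ▸ hF.hasFDerivAt
      exact h0.comp_hasDerivAt 0 (hL 0)
    have := ((ContinuousLinearMap.apply ℝ ℝ v).hasFDerivAt).comp_hasDerivAt 0 h1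
    exact this
  have hgmax : IsLocalMax (fun s => f (L s)) 0 := by
    filter_upwards [hLt.eventually hmax] with t ht
    simpa [hL0] using ht
  exact second_deriv_test_1d' hgmax hgev hg1

lemma bilin_expand' {n : ℕ} (B : (Fin n → ℝ) →L[ℝ] (Fin n → ℝ) →L[ℝ] ℝ) (x : Fin n → ℝ) :
    B x x = ∑ i, ∑ j, x i * x j * B (Pi.single i 1) (Pi.single j 1) := by
  have hx : x = ∑ i, x i • (Pi.single i 1 : Fin n → ℝ) := by
    ext j
    simp [Finset.sum_apply, Pi.single_apply, Finset.sum_ite_eq, eq_comm]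
  have h1 : ∀ (T : (Fin n → ℝ) →L[ℝ] ℝ), T x = ∑ j, x j * T (Pi.single j 1) := by
    intro T
    conv_lhs => rw [hx]
    rw [map_sum]
    exact Finset.sum_congr rfl fun j _ => by rw [_root_.map_smul, smul_eq_mul]
  have h2 : ∀ j, B x (Pi.single j 1) = ∑ i, x i * B (Pi.single i 1) (Pi.single j 1) := fun j => by
    have := h1 (B.flip (Pi.single j 1))
    simpa [ContinuousLinearMap.flip_apply] using this
  calc B x x = ∑ j, x j * B x (Pi.single j 1) := h1 (B x)
    _ = ∑ j, ∑ i, x i * x j * B (Pi.single i 1) (Pi.single j 1) := by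
        refine Finset.sum_congr rfl fun j _ => ?_
        rw [h2 j, Finset.mul_sum]
        exact Finset.sum_congr rfl fun i _ => by ring
    _ = ∑ i, ∑ j, x i * x j * B (Pi.single i 1) (Pi.single j 1) := Finset.sum_comm

end Aux

/-- (Monotonicity in ε) If `u_ε` solves the perturbed Dirichlet problem
`det Hess u = (−1/(u − ε))^{n+2}`, `u = 0` on `∂Ω`, then `ε < ε′` implies
`u_ε ≤ u_{ε′}` on `Ω`. -/
theorem perturbed_solutions_monotone {n : ℕ} (Ω : Set (Fin n → ℝ))
    (hΩ : IsOpen Ω) (hbd : Bornology.IsBounded Ω)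
    (ε ε' : ℝ) (hε : 0 < ε) (hεε' : ε < ε')
    (u u' : (Fin n → ℝ) → ℝ)
    (hu_cont : ContinuousOn u (closure Ω)) (hu'_cont : ContinuousOn u' (closure Ω))
    (hu_smooth : ContDiffOn ℝ (⊤ : ℕ∞) u Ω) (hu'_smooth : ContDiffOn ℝ (⊤ : ℕ∞) u' Ω)
    (hu_pos : ∀ x ∈ Ω, (Hess u x).PosDef) (hu'_pos : ∀ x ∈ Ω, (Hess u' x).PosDef)
    (hu_lt : ∀ x ∈ Ω, u x < ε) (hu'_lt : ∀ x ∈ Ω, u' x < ε')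
    (hu_ma : ∀ x ∈ Ω, (Hess u x).det = (-1 / (u x - ε)) ^ (n + 2))
    (hu'_ma : ∀ x ∈ Ω, (Hess u' x).det = (-1 / (u' x - ε')) ^ (n + 2))
    (hu_bdry : ∀ x ∈ frontier Ω, u x = 0)
    (hu'_bdry : ∀ x ∈ frontier Ω, u' x = 0) :
    ∀ x ∈ Ω, u x ≤ u' x := by
  intro x hx
  by_contra hcon
  push_neg at hcon
  set w : (Fin n → ℝ) → ℝ := fun y => u y - u' y with hwdef
  have hwcont : ContinuousOn w (closure Ω) := hu_cont.sub hu'_cont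
  have hcomp : IsCompact (closure Ω) := hbd.isCompact_closure
  have hne : (closure Ω).Nonempty := ⟨x, subset_closure hx⟩
  obtain ⟨z, hzcl, hzmax⟩ := hcomp.exists_isMaxOn hne hwcont
  have hwx : 0 < w x := by simp only [hwdef]; linarith
  have hwz : 0 < w z := lt_of_lt_of_le hwx (hzmax (subset_closure hx))
  have hzΩ : z ∈ Ω := by
    by_contra hzn
    have hfr : z ∈ frontier Ω := by
      rw [hΩ.frontier_eq]
      exact ⟨hzcl, hzn⟩
    have : w z = 0 := by simp [hwdef, hu_bdry z hfr, hu'_bdry z hfr]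
    linarith
  have hnh : Ω ∈ 𝓝 z := hΩ.mem_nhds hzΩ
  have hlmax : IsLocalMax w z := hzmax.isLocalMax (mem_of_superset hnh subset_closure)
  have hu2 : ContDiffAt ℝ 2 u z := (hu_smooth.contDiffAt hnh).of_le (WithTop.coe_le_coe.2 (le_top : (2 : ℕ∞) ≤ ⊤))
  have hu'2 : ContDiffAt ℝ 2 u' z := (hu'_smooth.contDiffAt hnh).of_le (WithTop.coe_le_coe.2 (le_top : (2 : ℕ∞) ≤ ⊤))
  have hw2 : ContDiffAt ℝ 2 w z := hu2.sub hu'2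
  set Bu := fderiv ℝ (fderiv ℝ u) z with hBudef
  set Bu' := fderiv ℝ (fderiv ℝ u') z with hBu'def
  set Bw := fderiv ℝ (fderiv ℝ w) z with hBwdef
  have hdu : DifferentiableAt ℝ (fderiv ℝ u) z :=
    (hu2.fderiv_right (m := 1) (by norm_num)).differentiableAt one_ne_zero
  have hdu' : DifferentiableAt ℝ (fderiv ℝ u') z :=
    (hu'2.fderiv_right (m := 1) (by norm_num)).differentiableAt one_ne_zero
  have hBw : Bw = Bu - Bu' := by
    have hev : fderiv ℝ w =ᶠ[𝓝 z] fun y => fderiv ℝ u y - fderiv ℝ u' y := by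
      filter_upwards [hu2.eventually (by simp), hu'2.eventually (by simp)] with y hy hy'
      exact fderiv_sub (hy.differentiableAt two_ne_zero) (hy'.differentiableAt two_ne_zero)
    rw [hBwdef, hev.fderiv_eq]
    exact fderiv_sub hdu hdu'
  have hHess : ∀ (f : (Fin n → ℝ) → ℝ) (i j : Fin n),
      Hess f z i j = fderiv ℝ (fderiv ℝ f) z (Pi.single i 1) (Pi.single j 1) := by
    intro f i j
    show iteratedFDeriv ℝ 2 f z ![Pi.single i 1, Pi.single j 1] = _
    rw [iteratedFDeriv_two_apply]
    simp
  have hsymm_u : IsSymmSndFDerivAt ℝ u z := hu2.isSymmSndFDerivAt (by simp)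
  have hsymm_u' : IsSymmSndFDerivAt ℝ u' z := hu'2.isSymmSndFDerivAt (by simp)
  have hPSD : (Hess u' z - Hess u z).PosSemidef := by
    refine Matrix.PosSemidef.of_dotProduct_mulVec_nonneg ?_ ?_
    · show (Hess u' z - Hess u z)ᴴ = Hess u' z - Hess u z
      ext i j
      simp only [Matrix.conjTranspose_apply, Matrix.sub_apply, star_trivial]
      rw [hHess u' j i, hHess u j i, hHess u' i j, hHess u i j,
        hsymm_u'.eq (Pi.single j 1) (Pi.single i 1), hsymm_u.eq (Pi.single j 1) (Pi.single i 1)]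
    · intro v
      have hvv : Bw v v ≤ 0 := snd_deriv_nonpos_at_localMax' hw2 hlmax v
      rw [hBw, ContinuousLinearMap.sub_apply, ContinuousLinearMap.sub_apply] at hvv
      have hcalc : dotProduct v ((Hess u' z - Hess u z) *ᵥ v) = Bu' v v - Bu v v := by
        calc dotProduct v ((Hess u' z - Hess u z) *ᵥ v)
            = ∑ i, ∑ j, v i * v j * (Hess u' z i j - Hess u z i j) := by
              simp only [dotProduct, Matrix.mulVec, Matrix.sub_apply]
              refine Finset.sum_congr rfl fun i _ => ?_
              rw [Finset.mul_sum]
              exact Finset.sum_congr rfl fun j _ => by ring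
          _ = Bu' v v - Bu v v := by
              rw [bilin_expand' Bu' v, bilin_expand' Bu v, ← Finset.sum_sub_distrib]
              refine Finset.sum_congr rfl fun i _ => ?_
              rw [← Finset.sum_sub_distrib]
              refine Finset.sum_congr rfl fun j _ => ?_
              rw [hHess u' i j, hHess u i j]
              ring
      rw [star_trivial, hcalc]
      linarith
  have hdet_le : (Hess u z).det ≤ (Hess u' z).det := det_mono' (hu_pos z hzΩ) hPSD
  have h1 : u' z < u z := by
    have : 0 < u z - u' z := hwz
    linarith
  have ha : u z - ε < 0 := by have := hu_lt z hzΩ; linarith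
  have hb0 : u' z - ε' < 0 := by linarith
  have hq : (0:ℝ) < -1 / (u' z - ε') := by
    rw [div_pos_iff]; right; constructor <;> linarith
  have hlt : -1 / (u' z - ε') < -1 / (u z - ε) := by
    have e1 : -1 / (u z - ε) = 1 / (ε - u z) := by
      rw [show (u z - ε) = -(ε - u z) from by ring, div_neg, neg_div, neg_neg]
    have e2 : -1 / (u' z - ε') = 1 / (ε' - u' z) := by
      rw [show (u' z - ε') = -(ε' - u' z) from by ring, div_neg, neg_div, neg_neg]
    rw [e1, e2]
    exact one_div_lt_one_div_of_lt (by linarith) (by linarith)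
  have hpow : (-1 / (u' z - ε')) ^ (n + 2) < (-1 / (u z - ε)) ^ (n + 2) :=
    pow_lt_pow_left₀ hlt hq.le (by omega)
  rw [← hu_ma z hzΩ, ← hu'_ma z hzΩ] at hpow
  linarith
end

section
/- Let F, G be holomorphic functions on a domain D ⊆ ℂ with |F′(z)| < |G′(z)| for all z ∈ D. Then the map f : D → ℝ³ given by f = ( ½(G + conj(F)), ⅛(|G|² − |F|²), ¼ Re(G·F) − ½ Re ∫ F dG ) is a smooth immersion whose image is a convex surface; in particular, its first component map z ↦ ½(G(z) + conj(F(z))) is an immersion of D into ℂ ≅ ℝ². -/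
open Complex

lemma wpas_key_identity (Fz Gz Hz F0 G0 H0 : ℂ) :
    (((starRingEnd ℂ) (-(1/2) * (G0 - (starRingEnd ℂ) F0)) * ((1/2)*(Gz + (starRingEnd ℂ) Fz))).re
      + (1/8)*(‖Gz‖^2 - ‖Fz‖^2) + ((1/4)*(Gz*Fz).re - (1/2)*Hz.re))
    - (((starRingEnd ℂ) (-(1/2) * (G0 - (starRingEnd ℂ) F0)) * ((1/2)*(G0 + (starRingEnd ℂ) F0))).re
      + (1/8)*(‖G0‖^2 - ‖F0‖^2) + ((1/4)*(G0*F0).re - (1/2)*H0.re))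
    = (1/8)*(‖Gz - G0‖^2 - ‖Fz - F0‖^2)
      + (1/4)*((Fz + F0)*(Gz - G0) - 2*(Hz - H0)).re := by
  simp only [Complex.sq_norm, Complex.normSq_apply, Complex.mul_re, Complex.add_re, Complex.sub_re,
    Complex.add_im, Complex.sub_im, Complex.mul_im, Complex.conj_re, Complex.conj_im,
    Complex.neg_re, Complex.neg_im, Complex.one_re, Complex.one_im, Complex.div_re,
    Complex.div_im, Complex.normSq_ofNat, Complex.re_ofNat, Complex.im_ofNat]
  norm_num
  ring

lemma wpas_phi_inj (F G : ℂ → ℂ) (z : ℂ)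
    (hFz : HasDerivAt F (deriv F z) z) (hGz : HasDerivAt G (deriv G z) z)
    (hab : ‖deriv F z‖ < ‖deriv G z‖) :
    Function.Injective (fderiv ℝ (fun w => (1 / 2) * (G w + (starRingEnd ℂ) (F w))) z) := by
  set a := deriv F z with ha
  set b := deriv G z with hb
  have hLF : HasFDerivAt F (((1 : ℂ →L[ℂ] ℂ).smulRight a).restrictScalars ℝ) z :=
    (hFz.hasFDerivAt).restrictScalars ℝ
  have hLG : HasFDerivAt G (((1 : ℂ →L[ℂ] ℂ).smulRight b).restrictScalars ℝ) z :=
    (hGz.hasFDerivAt).restrictScalars ℝ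
  have hconj : HasFDerivAt (fun w => (starRingEnd ℂ) (F w))
      ((Complex.conjCLE.toContinuousLinearMap).comp
        (((1 : ℂ →L[ℂ] ℂ).smulRight a).restrictScalars ℝ)) z :=
    (Complex.conjCLE.toContinuousLinearMap.hasFDerivAt).comp z hLF
  have hphi := (hLG.add hconj).const_mul ((1:ℂ)/2)
  rw [(show HasFDerivAt (fun w => (1 / 2) * (G w + (starRingEnd ℂ) (F w))) _ z from hphi).fderiv]
  intro h h' he
  simp only [ContinuousLinearMap.smul_apply, ContinuousLinearMap.add_apply,
    ContinuousLinearMap.coe_comp', Function.comp_apply,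
    ContinuousLinearMap.coe_restrictScalars', ContinuousLinearMap.smulRight_apply,
    ContinuousLinearMap.one_apply, ContinuousLinearEquiv.coe_coe,
    Complex.conjCLE_apply, smul_eq_mul] at he
  have key : ∀ u : ℂ, b * u + (starRingEnd ℂ) (a * u) = 0 → u = 0 := by
    intro u hu
    by_contra hne
    have h1 : b * u = -((starRingEnd ℂ) (a * u)) := by linear_combination hu
    have h2 : ‖b*u‖ = ‖a*u‖ := by rw [h1]; simp
    rw [norm_mul, norm_mul] at h2
    have hu0 : ‖u‖ ≠ 0 := by simpa using hne
    have hba : ‖b‖ = ‖a‖ := mul_right_cancel₀ hu0 h2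
    exact (ne_of_gt hab) hba
  have hsub : b*(h-h') + (starRingEnd ℂ) (a*(h-h')) = 0 := by
    rw [map_mul, map_sub]
    have he' : h * b + (starRingEnd ℂ) h * (starRingEnd ℂ) a
        = h' * b + (starRingEnd ℂ) h' * (starRingEnd ℂ) a := by
      field_simp at he
      simp only [map_mul] at he
      linear_combination he
    linear_combination he'
  exact sub_eq_zero.mp (key (h - h') hsub)

set_option maxHeartbeats 2000000 in
/-- (Ferrer–Martínez–Milán Weierstrass representation) Given holomorphic `F, G`
on a domain `D ⊆ ℂ` with `|F′| < |G′|`, and `H` a primitive of `F dG` on `D`,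
the map `f = (½(G + conj F), ⅛(|G|² − |F|²), ¼ Re(G F) − ½ Re H)` is a smooth
immersion whose image is a (locally) convex surface: every point of the image
admits a local support plane.  In particular the first component
`z ↦ ½(G(z) + conj F(z))` is an immersion of `D` into `ℂ ≅ ℝ²`. -/
theorem weierstrass_parabolic_affine_sphere (D : Set ℂ) (hD : IsOpen D)
    (hDconn : IsPreconnected D)
    (F G : ℂ → ℂ) (hF : DifferentiableOn ℂ F D) (hG : DifferentiableOn ℂ G D)
    (hFG : ∀ z ∈ D, ‖deriv F z‖ < ‖deriv G z‖)
    (H : ℂ → ℂ) (hH : ∀ z ∈ D, HasDerivAt H (F z * deriv G z) z)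
    (f : ℂ → ℂ × ℝ × ℝ)
    (hf : ∀ z, f z =
      ((1 / 2) * (G z + (starRingEnd ℂ) (F z)),
       (1 / 8) * (‖G z‖ ^ 2 - ‖F z‖ ^ 2),
       (1 / 4) * (G z * F z).re - (1 / 2) * (H z).re)) :
    ContDiffOn ℝ (⊤ : ℕ∞) f D ∧
    (∀ z ∈ D, Function.Injective (fderiv ℝ f z)) ∧
    (∀ z₀ ∈ D, ∃ ℓ : (ℂ × ℝ × ℝ) →L[ℝ] ℝ, ℓ ≠ 0 ∧
      ∃ U ∈ nhds z₀, U ⊆ D ∧ ∀ z ∈ U, ℓ (f z₀) ≤ ℓ (f z)) ∧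
    (∀ z ∈ D, Function.Injective
      (fderiv ℝ (fun w => (1 / 2) * (G w + (starRingEnd ℂ) (F w))) z)) := by
  -- derivatives of F and G at points of D
  have hFd : ∀ z ∈ D, HasDerivAt F (deriv F z) z := fun z hz =>
    (hF.differentiableAt (hD.mem_nhds hz)).hasDerivAt
  have hGd : ∀ z ∈ D, HasDerivAt G (deriv G z) z := fun z hz =>
    (hG.differentiableAt (hD.mem_nhds hz)).hasDerivAt
  -- smoothness
  have hfe : f = fun z => (((1:ℂ) / 2) * (G z + (starRingEnd ℂ) (F z)),
       ((1:ℝ) / 8) * (‖G z‖ ^ 2 - ‖F z‖ ^ 2),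
       ((1:ℝ) / 4) * (G z * F z).re - ((1:ℝ) / 2) * (H z).re) := funext hf
  have hFs : ContDiffOn ℝ (⊤ : ℕ∞) F D := (hF.contDiffOn hD).restrict_scalars ℝ
  have hGs : ContDiffOn ℝ (⊤ : ℕ∞) G D := (hG.contDiffOn hD).restrict_scalars ℝ
  have hHdiff : DifferentiableOn ℂ H D := fun z hz =>
    (hH z hz).differentiableAt.differentiableWithinAt
  have hHs : ContDiffOn ℝ (⊤ : ℕ∞) H D := (hHdiff.contDiffOn hD).restrict_scalars ℝ
  have habs : ∀ (g : ℂ → ℂ), ContDiffOn ℝ (⊤ : ℕ∞) g D →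
      ContDiffOn ℝ (⊤ : ℕ∞) (fun z => ‖g z‖ ^ 2) D := by
    intro g hg
    have : ContDiffOn ℝ (⊤ : ℕ∞) (fun z => ‖g z‖ ^ 2) D :=
      (contDiff_id.norm_sq ℝ).comp_contDiffOn hg
    exact this
  have hsmooth : ContDiffOn ℝ (⊤ : ℕ∞) f D := by
    rw [hfe]
    refine ContDiffOn.prodMk ?_ (ContDiffOn.prodMk ?_ ?_)
    · exact contDiffOn_const.mul (hGs.add (Complex.conjCLE.contDiff.comp_contDiffOn hFs))
    · exact contDiffOn_const.mul ((habs G hGs).sub (habs F hFs))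
    · exact (contDiffOn_const.mul (Complex.reCLM.contDiff.comp_contDiffOn (hGs.mul hFs))).sub
        (contDiffOn_const.mul (Complex.reCLM.contDiff.comp_contDiffOn hHs))
  -- injectivity of the first-component differential
  have hphiinj : ∀ z ∈ D, Function.Injective
      (fderiv ℝ (fun w => (1 / 2) * (G w + (starRingEnd ℂ) (F w))) z) := fun z hz =>
    wpas_phi_inj F G z (hFd z hz) (hGd z hz) (hFG z hz)
  refine ⟨hsmooth, ?_, ?_, hphiinj⟩
  · -- injectivity of the full differential
    intro z hz
    have hdf : DifferentiableAt ℝ f z :=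
      (hsmooth.differentiableOn (by simp)).differentiableAt (hD.mem_nhds hz)
    have hcomp : HasFDerivAt (fun w => (1 / 2) * (G w + (starRingEnd ℂ) (F w)))
        ((ContinuousLinearMap.fst ℝ ℂ (ℝ × ℝ)).comp (fderiv ℝ f z)) z := by
      have h1 := ((ContinuousLinearMap.fst ℝ ℂ (ℝ × ℝ)).hasFDerivAt).comp z hdf.hasFDerivAt
      have h2 : (⇑(ContinuousLinearMap.fst ℝ ℂ (ℝ × ℝ)) ∘ f)
          = fun w => (1 / 2) * (G w + (starRingEnd ℂ) (F w)) := by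
        funext w
        simp only [Function.comp_apply, hf w]
        rfl
      rwa [h2] at h1
    intro h h' he
    apply hphiinj z hz
    rw [hcomp.fderiv]
    simp only [ContinuousLinearMap.coe_comp', Function.comp_apply, he]
  · -- support plane
    intro z₀ hz₀
    set a := deriv F z₀ with hadef
    set b := deriv G z₀ with hbdef
    have hab : ‖a‖ < ‖b‖ := hFG z₀ hz₀
    set μ : ℂ := -(1/2) * (G z₀ - (starRingEnd ℂ) (F z₀)) with hμdef
    set ℓ : (ℂ × ℝ × ℝ) →L[ℝ] ℝ :=
      Complex.reCLM.comp (((starRingEnd ℂ) μ) • (ContinuousLinearMap.fst ℝ ℂ (ℝ × ℝ)))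
        + (ContinuousLinearMap.fst ℝ ℝ ℝ).comp (ContinuousLinearMap.snd ℝ ℂ (ℝ × ℝ))
        + (ContinuousLinearMap.snd ℝ ℝ ℝ).comp (ContinuousLinearMap.snd ℝ ℂ (ℝ × ℝ)) with hℓdef
    have hℓapp : ∀ p : ℂ × ℝ × ℝ, ℓ p = ((starRingEnd ℂ) μ * p.1).re + p.2.1 + p.2.2 := by
      intro p
      simp [hℓdef, smul_eq_mul]
    refine ⟨ℓ, ?_, ?_⟩
    · intro h0
      have h1 : ℓ ((0:ℂ), (1:ℝ), (0:ℝ)) = 0 := by rw [h0]; simp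
      rw [hℓapp] at h1
      simp at h1
    -- key exact identity
    have hkey : ∀ z, ℓ (f z) - ℓ (f z₀)
        = (1/8)*(‖G z - G z₀‖^2 - ‖F z - F z₀‖^2)
          + (1/4)*((F z + F z₀)*(G z - G z₀) - 2*(H z - H z₀)).re := by
      intro z
      rw [hf z, hf z₀, hℓapp, hℓapp]
      have := wpas_key_identity (F z) (G z) (H z) (F z₀) (G z₀) (H z₀)
      rw [hμdef]
      linarith [this]
    -- the function Ψ and its derivative
    set Ψ : ℂ → ℂ := fun w => (F w + F z₀) * (G w - G z₀) - 2*(H w - H z₀) with hΨdef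
    set Ψd : ℂ → ℂ := fun w => deriv F w * (G w - G z₀) - (F w - F z₀) * deriv G w with hΨddef
    have hΨderiv : ∀ x ∈ D, HasDerivAt Ψ (Ψd x) x := by
      intro x hx
      have h1 := ((hFd x hx).add_const (F z₀)).mul ((hGd x hx).sub_const (G z₀))
      have h2 := ((hH x hx).sub_const (H z₀)).const_mul (2:ℂ)
      have this : HasDerivAt Ψ _ x := h1.sub h2
      convert this using 1
      simp [hΨddef]; ring
    have hΨz₀ : Ψ z₀ = 0 := by simp [hΨdef]
    -- Ψd has derivative 0 at z₀
    have hdF2 : DifferentiableAt ℂ (deriv F) z₀ :=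
      ((hF.analyticOnNhd hD).deriv).differentiableOn.differentiableAt (hD.mem_nhds hz₀)
    have hdG2 : DifferentiableAt ℂ (deriv G) z₀ :=
      ((hG.analyticOnNhd hD).deriv).differentiableOn.differentiableAt (hD.mem_nhds hz₀)
    have hΨd0 : HasDerivAt Ψd 0 z₀ := by
      have t1 := (hdF2.hasDerivAt).mul ((hGd z₀ hz₀).sub_const (G z₀))
      have t2 := ((hFd z₀ hz₀).sub_const (F z₀)).mul (hdG2.hasDerivAt)
      have this : HasDerivAt Ψd _ z₀ := t1.sub t2
      convert this using 1
      simp [← hadef, ← hbdef]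
    -- quantities
    have hbpos : (0:ℝ) < ‖b‖ := lt_of_le_of_lt (norm_nonneg a) hab
    obtain ⟨ε, hεpos, hεmul, hεb⟩ : ∃ ε : ℝ, 0 < ε ∧
        ε * (2*(‖a‖ + ‖b‖ + 1)) = ‖b‖^2 - ‖a‖^2 ∧
        ε ≤ ‖b‖ := by
      have hdenom : (0:ℝ) < 2*(‖a‖ + ‖b‖ + 1) := by positivity
      refine ⟨(‖b‖^2 - ‖a‖^2) / (2*(‖a‖ + ‖b‖ + 1)),
        ?_, ?_, ?_⟩
      · apply div_pos _ hdenom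
        nlinarith [norm_nonneg a, norm_nonneg b]
      · exact div_mul_cancel₀ _ (ne_of_gt hdenom)
      · rw [div_le_iff₀ hdenom]
        nlinarith [norm_nonneg a, norm_nonneg b]
    -- eventual bounds
    have E1 : ∀ᶠ w in nhds z₀, ‖F w - F z₀ - (w - z₀) • a‖ ≤ ε * ‖w - z₀‖ :=
      (hasDerivAt_iff_isLittleO.mp (hFd z₀ hz₀)).def hεpos
    have E2 : ∀ᶠ w in nhds z₀, ‖G w - G z₀ - (w - z₀) • b‖ ≤ ε * ‖w - z₀‖ :=
      (hasDerivAt_iff_isLittleO.mp (hGd z₀ hz₀)).def hεpos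
    have E3 : ∀ᶠ w in nhds z₀, ‖Ψd w‖ ≤ ε * ‖w - z₀‖ := by
      have h0 := (hasDerivAt_iff_isLittleO.mp hΨd0).def hεpos
      have hΨdz₀ : Ψd z₀ = 0 := by simp [hΨddef]
      filter_upwards [h0] with w hw
      simpa [hΨdz₀] using hw
    have E4 : ∀ᶠ w in nhds z₀, w ∈ D := hD.mem_nhds hz₀
    obtain ⟨r, hrpos, hball⟩ := Metric.eventually_nhds_iff_ball.mp (((E1.and E2).and E3).and E4)
    refine ⟨Metric.ball z₀ r, Metric.ball_mem_nhds z₀ hrpos, fun w hw => (hball w hw).2, ?_⟩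
    intro z hz
    have hzD := (hball z hz).2
    obtain ⟨⟨hE1, hE2⟩, hE3⟩ := (hball z hz).1
    set t : ℝ := ‖z - z₀‖ with htdef
    have ht0 : 0 ≤ t := norm_nonneg _
    have htr : t < r := by
      have := Metric.mem_ball.mp hz
      rwa [dist_eq_norm] at this
    simp only [smul_eq_mul] at hE1 hE2
    -- bounds on P and Q
    have hP : (‖b‖ - ε) * t ≤ ‖G z - G z₀‖ := by
      have hrw : (z - z₀) * b = (G z - G z₀) - (G z - G z₀ - (z - z₀) * b) := by ring
      have h1 : ‖(z - z₀) * b‖ ≤ ‖G z - G z₀‖ + ‖G z - G z₀ - (z - z₀) * b‖ := by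
        nth_rewrite 1 [hrw]; exact norm_sub_le _ _
      have h2 : ‖(z - z₀) * b‖ = t * ‖b‖ := by
        rw [norm_mul]
      nlinarith [hE2, h1]
    have hQ : ‖F z - F z₀‖ ≤ (‖a‖ + ε) * t := by
      have hrw : F z - F z₀ = (z - z₀) * a + (F z - F z₀ - (z - z₀) * a) := by ring
      have h1 : ‖F z - F z₀‖ ≤ ‖(z - z₀) * a‖ + ‖F z - F z₀ - (z - z₀) * a‖ := by
        nth_rewrite 1 [hrw]; exact norm_add_le _ _
      have h2 : ‖(z - z₀) * a‖ = t * ‖a‖ := by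
        rw [norm_mul]
      nlinarith [hE1, h1]
    -- bound on Ψ via MVT
    have hΨbound : ‖Ψ z‖ ≤ ε * t * t := by
      have hsub : Metric.closedBall z₀ t ⊆ Metric.ball z₀ r := Metric.closedBall_subset_ball htr
      have hder : ∀ x ∈ Metric.closedBall z₀ t, HasDerivWithinAt Ψ (Ψd x) (Metric.closedBall z₀ t) x :=
        fun x hx => (hΨderiv x (hball x (hsub hx)).2).hasDerivWithinAt
      have hbd : ∀ x ∈ Metric.closedBall z₀ t, ‖Ψd x‖ ≤ ε * t := by
        intro x hx
        have hx' := (hball x (hsub hx)).1.2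
        have hxt : ‖x - z₀‖ ≤ t := by
          have := Metric.mem_closedBall.mp hx
          rwa [dist_eq_norm] at this
        calc ‖Ψd x‖ ≤ ε * ‖x - z₀‖ := hx'
          _ ≤ ε * t := by nlinarith
      have := (convex_closedBall z₀ t).norm_image_sub_le_of_norm_hasDerivWithin_le hder hbd
        (Metric.mem_closedBall_self ht0)
        (Metric.mem_closedBall.mpr (le_of_eq (dist_eq_norm z z₀)))
      rw [hΨz₀, sub_zero] at this
      calc ‖Ψ z‖ ≤ ε * t * ‖z - z₀‖ := this
        _ = ε * t * t := by rw [← htdef]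
    -- conclude
    rw [← sub_nonneg, hkey z]
    have hre : -(ε * t * t) ≤ ((F z + F z₀)*(G z - G z₀) - 2*(H z - H z₀)).re := by
      have h1 : |(Ψ z).re| ≤ ‖Ψ z‖ := Complex.abs_re_le_norm _
      have h2 : ‖Ψ z‖ = ‖Ψ z‖ := rfl
      have h3 : -(ε * t * t) ≤ (Ψ z).re := by
        have := neg_abs_le (Ψ z).re
        nlinarith [hΨbound]
      simpa [hΨdef] using h3
    have hPabs : ‖G z - G z₀‖ = ‖G z - G z₀‖ := rfl
    have hQabs : ‖F z - F z₀‖ = ‖F z - F z₀‖ := rfl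
    rw [hPabs, hQabs]
    have hbε : 0 ≤ (‖b‖ - ε) := by linarith
    have hPsq : ((‖b‖ - ε) * t)^2 ≤ ‖G z - G z₀‖^2 := by
      have h0 : 0 ≤ (‖b‖ - ε) * t := mul_nonneg hbε ht0
      nlinarith [hP, norm_nonneg (G z - G z₀)]
    have hQsq : ‖F z - F z₀‖^2 ≤ ((‖a‖ + ε) * t)^2 := by
      have h0 : 0 ≤ ‖F z - F z₀‖ := norm_nonneg _
      nlinarith [hQ, norm_nonneg a]
    have h5 : (1/8)*(((‖b‖ - ε) * t)^2 - ((‖a‖ + ε) * t)^2)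
        = (1/4)*ε*t^2 := by linear_combination (-(t^2)/8) * hεmul
    linarith [hPsq, hQsq, hre, h5]
end
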